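/- Let A = ⟨Q, Σ₀ ∪ {a}⟩ be a standardized almost group automaton with e = excl(a), d = dupl(a), and e ≠ d. Then e and d lie in the same strongly connected component of Γ₁(A); in particular C_e is not a singleton. -/

import Mathlib

/-- The transformation monoid generated by the permutation letters S0 and the
defect-1 letter a. -/
def Mgen {Q : Type*} (S0 : Set (Equiv.Perm Q)) (a : Function.End Q) :
    Submonoid (Function.End Q) :=
  Submonoid.closure ((fun σ : Equiv.Perm Q => (⇑σ : Function.End Q)) '' S0 ∪ {a})

/-- Edges of the Rystsov graph Γ₁(A). -/
def edge {Q : Type*} (S0 : Set (Equiv.Perm Q)) (a : Function.End Q)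
    (q p : Q) : Prop :=
  ∃ w ∈ Mgen S0 a, ((Set.range (w : Q → Q))ᶜ : Set Q) = {q} ∧
    {x : Q | ∃ y z : Q, y ≠ z ∧ w y = x ∧ w z = x} = {p}

/-- The strongly connected component of q in Γ₁(A). -/
def scc {Q : Type*} (S0 : Set (Equiv.Perm Q)) (a : Function.End Q)
    (q : Q) : Set Q :=
  {p : Q | Relation.ReflTransGen (edge S0 a) q p ∧
    Relation.ReflTransGen (edge S0 a) p q}

/-!
Γ₁(A) is invariant under the group G generated by Σ₀: post-composing a defect-1 word with
σ ∈ G moves its excluded and duplicated states by σ. Taking σ ∈ G with σ e = d, the edge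
e → d of the letter a is thus carried to the path d → σ d → σ² d → ⋯, which returns to e
because σ has finite order.
-/

theorem Relation.ReflTransGen.apply_self_of_isOfFinOrder {α : Type*} {r : α → α → Prop}
    {τ : Equiv.Perm α} (hτ : IsOfFinOrder τ) (hr : ∀ x y, r x y → r (τ x) (τ y))
    {x : α} (hx : r x (τ x)) : Relation.ReflTransGen r (τ x) x := by
  have step : ∀ n : ℕ, r ((τ ^ n) x) ((τ ^ (n + 1)) x) := by
    intro n
    induction n with
    | zero => simpa using hx
    | succ n ih => simpa only [pow_succ', Equiv.Perm.mul_apply] using hr _ _ ih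
  have path : ∀ n : ℕ, Relation.ReflTransGen r (τ x) ((τ ^ (n + 1)) x) := by
    intro n
    induction n with
    | zero => simpa using Relation.ReflTransGen.refl
    | succ n ih => exact ih.tail (step (n + 1))
  simpa [Nat.sub_add_cancel hτ.orderOf_pos, pow_orderOf_eq_one] using path (orderOf τ - 1)

section Collisions

variable {Q : Type*} (σ : Equiv.Perm Q) (f : Q → Q)

theorem compl_range_perm_comp : (Set.range (σ ∘ f))ᶜ = σ '' (Set.range f)ᶜ := by
  rw [Set.range_comp, Equiv.image_compl]

theorem collisions_perm_comp :
    {x : Q | ∃ y z : Q, y ≠ z ∧ σ (f y) = x ∧ σ (f z) = x} =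
      σ '' {x : Q | ∃ y z : Q, y ≠ z ∧ f y = x ∧ f z = x} := by
  ext x
  simp only [Set.mem_ofPred_eq, Equiv.image_eq_preimage_symm, Set.mem_preimage,
    Equiv.eq_symm_apply]

end Collisions

theorem perm_mem_Mgen {Q : Type*} [Finite Q] {S0 : Set (Equiv.Perm Q)} {σ : Equiv.Perm Q}
    (hσ : σ ∈ Subgroup.closure S0) (a : Function.End Q) :
    MulAction.toEndHom σ ∈ Mgen S0 a := by
  rw [← Subgroup.mem_toSubmonoid, Subgroup.closure_toSubmonoid_of_finite] at hσ
  have hσ' := Submonoid.mem_map_of_mem (MulAction.toEndHom (M := Equiv.Perm Q) (α := Q)) hσ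
  rw [MonoidHom.map_mclosure] at hσ'
  exact Submonoid.closure_mono Set.subset_union_left hσ'

theorem edge_of_defect_one {Q : Type*} {S0 : Set (Equiv.Perm Q)} {a : Function.End Q} {e d : Q}
    (ha : ((Set.range (a : Q → Q))ᶜ : Set Q) = {e})
    (hd : {x : Q | ∃ y z : Q, y ≠ z ∧ a y = x ∧ a z = x} = {d}) : edge S0 a e d :=
  ⟨a, Submonoid.subset_closure (Or.inr rfl), ha, hd⟩

theorem edge_perm_apply {Q : Type*} [Finite Q] {S0 : Set (Equiv.Perm Q)} {a : Function.End Q}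
    {σ : Equiv.Perm Q} (hσ : σ ∈ Subgroup.closure S0) {q p : Q} (h : edge S0 a q p) :
    edge S0 a (σ q) (σ p) := by
  obtain ⟨w, hw, hq, hp⟩ := h
  refine ⟨MulAction.toEndHom σ * w, Submonoid.mul_mem _ (perm_mem_Mgen hσ a) hw, ?_, ?_⟩
  · rw [← Set.image_singleton, ← hq]
    exact compl_range_perm_comp σ w
  · rw [← Set.image_singleton, ← hp]
    exact collisions_perm_comp σ w

theorem stmt14_general {Q : Type*} [Fintype Q] (S0 : Set (Equiv.Perm Q))
    (a : Function.End Q) (e d : Q)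
    (ha : ((Set.range (a : Q → Q))ᶜ : Set Q) = {e})
    (hd : {x : Q | ∃ y z : Q, y ≠ z ∧ a y = x ∧ a z = x} = {d})
    (hed : e ≠ d)
    (htrans : ∀ p q : Q, ∃ σ ∈ Subgroup.closure S0, σ p = q) :
    d ∈ scc S0 a e ∧ ∀ q : Q, scc S0 a e ≠ {q} := by
  obtain ⟨σ, hσ, rfl⟩ := htrans e d
  have hedge : edge S0 a e (σ e) := edge_of_defect_one ha hd
  have hback : Relation.ReflTransGen (edge S0 a) (σ e) e :=
    .apply_self_of_isOfFinOrder (isOfFinOrder_of_finite σ)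
      (fun _ _ h => edge_perm_apply hσ h) hedge
  have hd_mem : σ e ∈ scc S0 a e := ⟨.single hedge, hback⟩
  have he_mem : e ∈ scc S0 a e := ⟨.refl, .refl⟩
  refine ⟨hd_mem, fun q hq => hed ?_⟩
  rw [hq] at hd_mem he_mem
  exact he_mem.trans hd_mem.symm

/-- In a standardized almost group automaton, the excluded state e and the
duplicated state d of a lie in the same strongly connected component of Γ₁(A);
in particular C_e is not a singleton. -/
theorem stmt14 {Q : Type*} [Fintype Q] (S0 : Set (Equiv.Perm Q))
    (a : Function.End Q) (e d : Q)
    (ha : ((Set.range (a : Q → Q))ᶜ : Set Q) = {e})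
    (hd : {x : Q | ∃ y z : Q, y ≠ z ∧ a y = x ∧ a z = x} = {d})
    (hstd : ∃ p : Q, p ≠ e ∧ a p = a e)
    (hed : e ≠ d)
    (htrans : ∀ p q : Q, ∃ σ ∈ Subgroup.closure S0, σ p = q) :
    d ∈ scc S0 a e ∧ ∀ q : Q, scc S0 a e ≠ {q} :=
  stmt14_general S0 a e d ha hd hed htrans
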